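/- Assume the systems u_{n+1} = A_n u_n and v_{n+1} = (A_n + E_n) v_n both have CEDs on J with the same rates σ_1 > … > σ_ϰ, with data (K, σ_k, 𝒫_{n,k}) and (K̃, σ_k, 𝒫̃_{n,k}) respectively, and assume 𝒫_{n,k} − 𝒫̃_{n,k} → 0 as n → ∞ for k = 1,…,ϰ, as well as Σ_{n∈J} ‖E_n‖ < ∞. Then the two systems are kinematically similar: there exist invertible matrices Q_n, n ∈ J, with Q_n and Q_n^{-1} uniformly bounded, such that Φ̃(n,m) Q_m = Q_n Φ(n,m) for all n, m ∈ J and lim_{n→∞} Q_n = I. -/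
import Mathlib


open scoped RealInnerProductSpace ENNReal
open Filter

noncomputable section

/-- `d`-dimensional Euclidean space `ℝ^d`. -/
abbrev Euc (d : ℕ) := EuclideanSpace ℝ (Fin d)

/-- Bounded linear operators on `ℝ^d` (i.e. `d × d` matrices, with the operator norm). -/
abbrev Op (d : ℕ) := Euc d →L[ℝ] Euc d

/-- The maximal principal angle between two subspaces of `ℝ^d`,
`∠(V,W) = arccos( min_{v ∈ V, ‖v‖=1} max_{w ∈ W, ‖w‖=1} vᵀw )`. -/
def subAngle {d : ℕ} (V W : Submodule ℝ (Euc d)) : ℝ :=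
  Real.arccos (sInf {x : ℝ | ∃ v ∈ V, ‖v‖ = 1 ∧
    x = sSup {y : ℝ | ∃ w ∈ W, ‖w‖ = 1 ∧ y = ⟪v, w⟫}})

/-- `Φ` is the solution operator of `u_{n+1} = A_n u_n` on `J = {n ∈ ℤ : n ≥ n₀}`:
`Φ(n,n) = I` and `Φ(n+1,m) = A_n Φ(n,m)` (for invertible `A_n` this uniquely
determines `Φ(n,m)` for all `n, m ∈ J`, forward and backward). -/
def IsSolOp {d : ℕ} (n₀ : ℤ) (A : ℤ → Op d) (Φ : ℤ → ℤ → Op d) : Prop :=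
  (∀ n : ℤ, n₀ ≤ n → Φ n n = 1) ∧
  (∀ n m : ℤ, n₀ ≤ n → n₀ ≤ m → Φ (n + 1) m = (A n).comp (Φ n m))

/-- The rate `λ^k` of a generalized exponential dichotomy, with the conventions
`0^k = 0` (used for `k ≥ 0`) and `∞^k = 0` (used for `k ≤ 0`). -/
def dichPow (lam : ℝ≥0∞) (k : ℤ) : ℝ≥0∞ :=
  if lam = 0 ∨ lam = ⊤ then 0 else lam ^ k

/-- Generalized exponential dichotomy (GED) on `J = {n ∈ ℤ : n ≥ n₀}` with data
`(K, λ₊, λ₋, P_n^±)`, where `P_n^- = 1 - P_n^+`: rates `0 ≤ λ₊ < λ₋ ≤ ∞` (the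
pair `(0,∞)` excluded), invariant projectors, and the estimates
`‖Φ(n,m)P_m^+‖ ≤ K λ₊^{n−m}` for `n ≥ m`, `‖Φ(n,m)P_m^-‖ ≤ K λ₋^{n−m}` for `n ≤ m`. -/
def GED {d : ℕ} (n₀ : ℤ) (Φ : ℤ → ℤ → Op d) (K : ℝ) (lamP lamM : ℝ≥0∞)
    (P : ℤ → Op d) : Prop :=
  0 < K ∧ lamP < lamM ∧ ¬(lamP = 0 ∧ lamM = ⊤) ∧
  (∀ n : ℤ, n₀ ≤ n → (P n).comp (P n) = P n) ∧
  (∀ n m : ℤ, n₀ ≤ n → n₀ ≤ m → (P n).comp (Φ n m) = (Φ n m).comp (P m)) ∧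
  (∀ n m : ℤ, n₀ ≤ m → m ≤ n →
    (‖(Φ n m).comp (P m)‖₊ : ℝ≥0∞) ≤ ENNReal.ofReal K * dichPow lamP (n - m)) ∧
  (∀ n m : ℤ, n₀ ≤ n → n ≤ m →
    (‖(Φ n m).comp (1 - P m)‖₊ : ℝ≥0∞) ≤ ENNReal.ofReal K * dichPow lamM (n - m))

/-- Complete exponential dichotomy (CED) on `J = {n ∈ ℤ : n ≥ n₀}` with data
`(K, σ_k, 𝒫_{n,k})`, `k = 1,…,ϰ`: nontrivial pairwise orthogonal invariant
projectors summing to `I`, rates `0 < σ_ϰ < ⋯ < σ_1 < ∞`, and two-sided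
estimates `‖Φ(n,m)𝒫_{m,k}‖ ≤ K σ_k^{n−m}` for all `n, m ∈ J`. -/
def CED {d : ℕ} (n₀ : ℤ) (Φ : ℤ → ℤ → Op d) (K : ℝ) (kap : ℕ) (σ : ℕ → ℝ)
    (P : ℤ → ℕ → Op d) : Prop :=
  0 < K ∧ 0 < σ kap ∧ (∀ k : ℕ, 1 ≤ k → k < kap → σ (k + 1) < σ k) ∧
  (∀ (n : ℤ) (k : ℕ), n₀ ≤ n → 1 ≤ k → k ≤ kap → P n k ≠ 0) ∧
  (∀ (n : ℤ) (k l : ℕ), n₀ ≤ n → 1 ≤ k → k ≤ kap → 1 ≤ l → l ≤ kap →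
    (P n k).comp (P n l) = if k = l then P n k else 0) ∧
  (∀ n : ℤ, n₀ ≤ n → ∑ k ∈ Finset.Icc 1 kap, P n k = 1) ∧
  (∀ (n m : ℤ) (k : ℕ), n₀ ≤ n → n₀ ≤ m → 1 ≤ k → k ≤ kap →
    (Φ n m).comp (P m k) = (P n k).comp (Φ n m)) ∧
  (∀ (n m : ℤ) (k : ℕ), n₀ ≤ n → n₀ ≤ m → 1 ≤ k → k ≤ kap →
    ‖(Φ n m).comp (P m k)‖ ≤ K * σ k ^ (n - m))

lemma aux_tendsto_int_of_nat {X : Type*} [TopologicalSpace X] (n₀ : ℤ) {f : ℤ → X} {l : Filter X}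
    (h : Tendsto (fun j : ℕ => f (n₀ + j)) atTop l) : Tendsto f atTop l := by
  have h2 : Tendsto (fun n : ℤ => (n - n₀).toNat) atTop atTop :=
    tendsto_atTop_atTop.mpr fun b => ⟨n₀ + b, fun a ha => by omega⟩
  refine (h.comp h2).congr' ?_
  filter_upwards [eventually_ge_atTop n₀] with n hn
  simp only [Function.comp]
  congr 1
  omega

lemma aux_rec_unique {d : ℕ} (n₀ b : ℤ) (B : ℤ → Op d)
    (hB : ∀ n, n₀ ≤ n → IsUnit (B n)) (f g : ℤ → Op d) (hb : n₀ ≤ b) (hfg : f b = g b)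
    (hf : ∀ n, n₀ ≤ n → f (n + 1) = B n * f n)
    (hg : ∀ n, n₀ ≤ n → g (n + 1) = B n * g n) :
    ∀ n, n₀ ≤ n → f n = g n := by
  intro n
  refine Int.inductionOn' n b (fun _ => hfg) ?_ ?_
  · intro k hk ih _
    have hk' : n₀ ≤ k := le_trans hb hk
    rw [hf k hk', hg k hk', ih hk']
  · intro k hk ih hk1
    have h1 : f k = g k := ih (by omega)
    have h2 := hf (k - 1) hk1
    have h3 := hg (k - 1) hk1
    simp only [sub_add_cancel] at h2 h3
    exact (hB (k - 1) hk1).mul_left_cancel (by rw [← h2, ← h3, h1])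

set_option maxHeartbeats 2000000 in
set_option synthInstance.maxHeartbeats 200000 in
/-- if both the unperturbed and the perturbed system have CEDs with
the same rates, the fiber projectors converge to each other at infinity, and the
perturbation is summable, then the two systems are kinematically similar via
uniformly invertible transformations `Q_n` with `Q_n → I`. -/
theorem statement13 {d : ℕ} (n₀ : ℤ) (A E : ℤ → Op d) (Φ Φt : ℤ → ℤ → Op d)
    (hA : ∀ n : ℤ, n₀ ≤ n → IsUnit (A n))
    (hAbd : ∃ M : ℝ, ∀ n : ℤ, n₀ ≤ n → ‖A n‖ ≤ M ∧ ‖Ring.inverse (A n)‖ ≤ M)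
    (hΦ : IsSolOp n₀ A Φ)
    (hAE : ∀ n : ℤ, n₀ ≤ n → IsUnit (A n + E n))
    (hΦt : IsSolOp n₀ (fun n => A n + E n) Φt)
    (K Kt : ℝ) (kap : ℕ) (σ : ℕ → ℝ) (P Pt : ℤ → ℕ → Op d)
    (hCED : CED n₀ Φ K kap σ P)
    (hCEDt : CED n₀ Φt Kt kap σ Pt)
    (htend : ∀ k : ℕ, 1 ≤ k → k ≤ kap →
      Tendsto (fun n : ℤ => P n k - Pt n k) atTop (nhds 0))
    (hE : Summable (fun n : {m : ℤ // n₀ ≤ m} => ‖E (n : ℤ)‖)) :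
    ∃ Q : ℤ → Op d,
      (∀ n : ℤ, n₀ ≤ n → IsUnit (Q n)) ∧
      (∃ M : ℝ, ∀ n : ℤ, n₀ ≤ n → ‖Q n‖ ≤ M ∧ ‖Ring.inverse (Q n)‖ ≤ M) ∧
      (∀ n m : ℤ, n₀ ≤ n → n₀ ≤ m →
        (Φt n m).comp (Q m) = (Q n).comp (Φ n m)) ∧
      Tendsto (fun n : ℤ => Q n) atTop (nhds 1) := by
  classical
  obtain ⟨hK, hσkap, hσmono, -, hPorth, hPsum, hPcomm, hPbd⟩ := hCED
  obtain ⟨hKt, -, -, -, -, -, hPtcomm, hPtbd⟩ := hCEDt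
  have hσpos : ∀ k : ℕ, 1 ≤ k → k ≤ kap → 0 < σ k := by
    have key : ∀ i k : ℕ, 1 ≤ k → k ≤ kap → kap - k = i → 0 < σ k := by
      intro i
      induction i with
      | zero =>
        intro k hk1 hk2 h0
        have hkk : k = kap := by omega
        rwa [hkk]
      | succ i ih =>
        intro k hk1 hk2 h0
        have hlt : k < kap := by omega
        exact lt_trans (ih (k + 1) (by omega) (by omega) (by omega)) (hσmono k hk1 hlt)
    intro k hk1 hk2; exact key (kap - k) k hk1 hk2 rfl
  have hΦ1 : ∀ n, n₀ ≤ n → Φ n n = 1 := hΦ.1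
  have hΦt1 : ∀ n, n₀ ≤ n → Φt n n = 1 := hΦt.1
  have hΦrec : ∀ n m, n₀ ≤ n → n₀ ≤ m → Φ (n + 1) m = A n * Φ n m :=
    fun n m hn hm => hΦ.2 n m hn hm
  have hΦtrec : ∀ n m, n₀ ≤ n → n₀ ≤ m → Φt (n + 1) m = (A n + E n) * Φt n m :=
    fun n m hn hm => hΦt.2 n m hn hm
  have hcoc : ∀ n m l, n₀ ≤ n → n₀ ≤ m → n₀ ≤ l → Φ n m * Φ m l = Φ n l := by
    intro n m l hn hm hl
    refine aux_rec_unique n₀ m A hA (fun x => Φ x m * Φ m l) (fun x => Φ x l) hm ?_ ?_ ?_ n hn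
    · show Φ m m * Φ m l = Φ m l
      rw [hΦ1 m hm, one_mul]
    · intro x hx
      show Φ (x + 1) m * Φ m l = A x * (Φ x m * Φ m l)
      rw [hΦrec x m hx hm, mul_assoc]
    · intro x hx
      show Φ (x + 1) l = A x * Φ x l
      exact hΦrec x l hx hl
  have hcoct : ∀ n m l, n₀ ≤ n → n₀ ≤ m → n₀ ≤ l → Φt n m * Φt m l = Φt n l := by
    intro n m l hn hm hl
    refine aux_rec_unique n₀ m (fun x => A x + E x) hAE
      (fun x => Φt x m * Φt m l) (fun x => Φt x l) hm ?_ ?_ ?_ n hn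
    · show Φt m m * Φt m l = Φt m l
      rw [hΦt1 m hm, one_mul]
    · intro x hx
      show Φt (x + 1) m * Φt m l = (A x + E x) * (Φt x m * Φt m l)
      rw [hΦtrec x m hx hm, mul_assoc]
    · intro x hx
      show Φt (x + 1) l = (A x + E x) * Φt x l
      exact hΦtrec x l hx hl
  have hΦunit : ∀ n m, n₀ ≤ n → n₀ ≤ m → IsUnit (Φ n m) := by
    intro n m hn hm
    exact ⟨⟨Φ n m, Φ m n, by rw [hcoc n m n hn hm hn, hΦ1 n hn],
      by rw [hcoc m n m hm hn hm, hΦ1 m hm]⟩, rfl⟩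
  have hΦtunit : ∀ n m, n₀ ≤ n → n₀ ≤ m → IsUnit (Φt n m) := by
    intro n m hn hm
    exact ⟨⟨Φt n m, Φt m n, by rw [hcoct n m n hn hm hn, hΦt1 n hn],
      by rw [hcoct m n m hm hn hm, hΦt1 m hm]⟩, rfl⟩
  have hstept : ∀ m, n₀ ≤ m → Φt (m + 1) m = A m + E m := by
    intro m hm
    rw [hΦtrec m m hm hm, hΦt1 m hm, mul_one]
  have hinvt : ∀ m k, n₀ ≤ m → 1 ≤ k → k ≤ kap →
      (A m + E m) * Pt m k = Pt (m + 1) k * (A m + E m) := by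
    intro m k hm hk1 hk2
    have h := hPtcomm (m + 1) m k (by omega) hm hk1 hk2
    rw [hstept m hm] at h
    exact h
  have hPc : ∀ n m k, n₀ ≤ n → n₀ ≤ m → 1 ≤ k → k ≤ kap →
      Φ n m * P m k = P n k * Φ n m :=
    fun n m k hn hm h1 h2 => hPcomm n m k hn hm h1 h2
  have hbd1 : ∀ n m k, n₀ ≤ n → n₀ ≤ m → 1 ≤ k → k ≤ kap →
      ‖Φt n m * Pt m k‖ ≤ Kt * σ k ^ (n - m) :=
    fun n m k hn hm h1 h2 => hPtbd n m k hn hm h1 h2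
  have hbd2 : ∀ n m k, n₀ ≤ n → n₀ ≤ m → 1 ≤ k → k ≤ kap →
      ‖Φ n m * P m k‖ ≤ K * σ k ^ (n - m) :=
    fun n m k hn hm h1 h2 => hPbd n m k hn hm h1 h2
  have hPnorm : ∀ n k, n₀ ≤ n → 1 ≤ k → k ≤ kap → ‖P n k‖ ≤ K := by
    intro n k hn hk1 hk2
    have h := hbd2 n n k hn hn hk1 hk2
    rw [hΦ1 n hn, one_mul, sub_self, zpow_zero, mul_one] at h
    exact h
  -- definitions
  set g : ℤ → ℕ → ℕ → Op d := fun n k j =>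
    Φt n (n + j + 1) * (Pt (n + j + 1) k * (E (n + j) * (Φ (n + j) n * P n k))) with hgdef
  set T : ℤ → ℝ := fun n => ∑' j : ℕ, ‖E (n + j)‖ with hTdef
  set Gk : ℤ → ℕ → Op d := fun n k => ∑' j : ℕ, g n k j with hGkdef
  set Qk : ℤ → ℕ → Op d := fun n k => Pt n k * P n k - Gk n k with hQkdef
  set Q : ℤ → Op d := fun n => ∑ k ∈ Finset.Icc 1 kap, Qk n k with hQdef
  -- summability of the perturbation tails
  have hEsum : ∀ n : ℤ, n₀ ≤ n → Summable (fun j : ℕ => ‖E (n + j)‖) := by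
    intro n hn
    have hinj : Function.Injective
        (fun j : ℕ => (⟨n + j, by omega⟩ : {m : ℤ // n₀ ≤ m})) := by
      intro a b hab
      simp only [Subtype.mk.injEq] at hab
      omega
    have h2 := hE.comp_injective hinj
    refine h2.congr fun j => ?_
    rfl
  have hgbd : ∀ n k (j : ℕ), n₀ ≤ n → 1 ≤ k → k ≤ kap →
      ‖g n k j‖ ≤ Kt * K * (σ k)⁻¹ * ‖E (n + j)‖ := by
    intro n k j hn hk1 hk2
    have hσ := hσpos k hk1 hk2
    have h1 : ‖Φt n (n + j + 1) * Pt (n + j + 1) k‖ ≤ Kt * σ k ^ (n - (n + j + 1)) :=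
      hbd1 n (n + j + 1) k hn (by omega) hk1 hk2
    have h2 : ‖Φ (n + j) n * P n k‖ ≤ K * σ k ^ (n + j - n) :=
      hbd2 (n + j) n k (by omega) hn hk1 hk2
    have e : g n k j = (Φt n (n + j + 1) * Pt (n + j + 1) k) *
        (E (n + j) * (Φ (n + j) n * P n k)) := by
      simp only [hgdef]; rw [mul_assoc]
    have hEn : ‖E (n + j) * (Φ (n + j) n * P n k)‖ ≤ ‖E (n + j)‖ * (K * σ k ^ (n + j - n)) :=
      le_trans (norm_mul_le _ _) (mul_le_mul_of_nonneg_left h2 (norm_nonneg _))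
    have hA1 : (0:ℝ) ≤ Kt * σ k ^ (n - (n + j + 1)) :=
      mul_nonneg (le_of_lt hKt) (le_of_lt (zpow_pos hσ _))
    have hz : σ k ^ (n - (n + (j:ℤ) + 1)) * σ k ^ (n + (j:ℤ) - n) = (σ k)⁻¹ := by
      rw [← zpow_add₀ (ne_of_gt hσ),
        show n - (n + (j:ℤ) + 1) + (n + (j:ℤ) - n) = (-1 : ℤ) by ring, zpow_neg_one]
    calc ‖g n k j‖ ≤ (Kt * σ k ^ (n - (n + j + 1))) * (‖E (n + j)‖ * (K * σ k ^ (n + j - n))) := by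
          rw [e]
          exact le_trans (norm_mul_le _ _) (mul_le_mul h1 hEn (norm_nonneg _) hA1)
      _ = Kt * K * (σ k ^ (n - (n + (j:ℤ) + 1)) * σ k ^ (n + (j:ℤ) - n)) * ‖E (n + j)‖ := by
          ring
      _ = Kt * K * (σ k)⁻¹ * ‖E (n + j)‖ := by rw [hz]
  have hgsum : ∀ n k, n₀ ≤ n → 1 ≤ k → k ≤ kap → Summable (g n k) := by
    intro n k hn hk1 hk2
    refine Summable.of_norm (Summable.of_nonneg_of_le (fun j => norm_nonneg _)
      (fun j => hgbd n k j hn hk1 hk2) ?_)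
    exact (hEsum n hn).mul_left _
  have hGkbd : ∀ n k, n₀ ≤ n → 1 ≤ k → k ≤ kap →
      ‖Gk n k‖ ≤ Kt * K * (σ k)⁻¹ * T n := by
    intro n k hn hk1 hk2
    have hs : Summable (fun j : ℕ => Kt * K * (σ k)⁻¹ * ‖E (n + j)‖) :=
      (hEsum n hn).mul_left _
    have h1 : Summable (fun j : ℕ => ‖g n k j‖) :=
      Summable.of_nonneg_of_le (fun j => norm_nonneg _)
        (fun j => hgbd n k j hn hk1 hk2) hs
    calc ‖Gk n k‖ ≤ ∑' j : ℕ, ‖g n k j‖ := by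
          simp only [hGkdef]; exact norm_tsum_le_tsum_norm h1
      _ ≤ ∑' j : ℕ, Kt * K * (σ k)⁻¹ * ‖E (n + j)‖ :=
          Summable.tsum_le_tsum (fun j => hgbd n k j hn hk1 hk2) h1 hs
      _ = Kt * K * (σ k)⁻¹ * T n := by rw [tsum_mul_left]
  -- telescoping identity
  have hF : ∀ n, n₀ ≤ n → ∀ k, 1 ≤ k → k ≤ kap → ∀ j : ℕ,
      Φt n (n + j) * (Pt (n + j) k * (Φ (n + j) n * P n k))
        = Pt n k * P n k - ∑ i ∈ Finset.range j, g n k i := by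
    intro n hn k hk1 hk2 j
    induction j with
    | zero =>
      simp only [Nat.cast_zero, add_zero, Finset.range_zero, Finset.sum_empty, sub_zero]
      rw [hΦt1 n hn, hΦ1 n hn, one_mul, one_mul]
    | succ j ih =>
      have hnj : n₀ ≤ n + j := by omega
      rw [show (n + ((j + 1 : ℕ) : ℤ)) = n + (j : ℤ) + 1 by push_cast; ring]
      rw [Finset.sum_range_succ]
      rw [hΦrec (n + j) n hnj hn]
      have e2 : ∀ X : Op d, Pt (n + j + 1) k * (A (n + j) * X)
          = (A (n + j) + E (n + j)) * (Pt (n + j) k * X)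
            - Pt (n + j + 1) k * (E (n + j) * X) := by
        intro X
        have h := hinvt (n + j) k hnj hk1 hk2
        calc Pt (n + j + 1) k * (A (n + j) * X)
            = Pt (n + j + 1) k * ((A (n + j) + E (n + j)) * X)
              - Pt (n + j + 1) k * (E (n + j) * X) := by
              rw [← mul_sub]
              congr 1
              rw [← sub_mul]
              congr 1
              abel
          _ = (A (n + j) + E (n + j)) * (Pt (n + j) k * X)
              - Pt (n + j + 1) k * (E (n + j) * X) := by
              rw [← mul_assoc (Pt (n + j + 1) k) (A (n + j) + E (n + j)) X, ← h,
                mul_assoc]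
      rw [mul_assoc (A (n + j)) (Φ (n + j) n) (P n k), e2, mul_sub]
      have e3 : Φt n (n + j + 1) * ((A (n + j) + E (n + j)) * (Pt (n + j) k * (Φ (n + j) n * P n k)))
          = Φt n (n + j) * (Pt (n + j) k * (Φ (n + j) n * P n k)) := by
        rw [← mul_assoc, ← hstept (n + j) hnj, hcoct n (n + j + 1) (n + j) hn (by omega) hnj]
      rw [e3, ih]
      have hgj : g n k j = Φt n (n + j + 1) * (Pt (n + j + 1) k *
          (E (n + j) * (Φ (n + j) n * P n k))) := by
        simp only [hgdef]
      rw [← hgj, sub_sub]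
  -- limit identification
  have hFlim : ∀ n, n₀ ≤ n → ∀ k, 1 ≤ k → k ≤ kap →
      Tendsto (fun j : ℕ => Φt n (n + j) * (Pt (n + j) k * (Φ (n + j) n * P n k)))
        atTop (nhds (Qk n k)) := by
    intro n hn k hk1 hk2
    have h1 : Tendsto (fun j : ℕ => ∑ i ∈ Finset.range j, g n k i) atTop (nhds (Gk n k)) := by
      simpa only [hGkdef] using (hgsum n k hn hk1 hk2).hasSum.tendsto_sum_nat
    have h2 := (tendsto_const_nhds (α := ℕ) (f := atTop) (x := Pt n k * P n k)).sub h1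
    simp only [hQkdef]
    exact h2.congr fun j => (hF n hn k hk1 hk2 j).symm
  -- intertwining on the level of Qk
  have hQkcomm : ∀ n m, n₀ ≤ n → n₀ ≤ m → ∀ k, 1 ≤ k → k ≤ kap →
      Φt n m * Qk m k = Qk n k * Φ n m := by
    intro n m hn hm k hk1 hk2
    set N : ℤ := max n m with hNdef
    have hNn : n ≤ N := le_max_left _ _
    have hNm : m ≤ N := le_max_right _ _
    have hNn₀ : n₀ ≤ N := le_trans hn hNn
    have t1 : Tendsto (fun j : ℕ => Φt m (N + j) * (Pt (N + j) k * (Φ (N + j) m * P m k)))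
        atTop (nhds (Qk m k)) := by
      have hsh : Tendsto (fun j : ℕ => (N - m).toNat + j) atTop atTop :=
        tendsto_atTop_atTop.mpr fun b => ⟨b, fun a ha => by omega⟩
      have h := (hFlim m hm k hk1 hk2).comp hsh
      refine h.congr fun j => ?_
      simp only [Function.comp]
      rw [show m + (((N - m).toNat + j : ℕ) : ℤ) = N + j by push_cast; omega]
    have t2 : Tendsto (fun j : ℕ => Φt n (N + j) * (Pt (N + j) k * (Φ (N + j) n * P n k)))
        atTop (nhds (Qk n k)) := by
      have hsh : Tendsto (fun j : ℕ => (N - n).toNat + j) atTop atTop :=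
        tendsto_atTop_atTop.mpr fun b => ⟨b, fun a ha => by omega⟩
      have h := (hFlim n hn k hk1 hk2).comp hsh
      refine h.congr fun j => ?_
      simp only [Function.comp]
      rw [show n + (((N - n).toNat + j : ℕ) : ℤ) = N + j by push_cast; omega]
    have key : ∀ j : ℕ,
        Φt n m * (Φt m (N + j) * (Pt (N + j) k * (Φ (N + j) m * P m k)))
          = (Φt n (N + j) * (Pt (N + j) k * (Φ (N + j) n * P n k))) * Φ n m := by
      intro j
      have hNj : n₀ ≤ N + j := by omega
      rw [← mul_assoc, hcoct n m (N + j) hn hm hNj]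
      rw [mul_assoc, mul_assoc, mul_assoc, ← hPc n m k hn hm hk1 hk2]
      rw [← mul_assoc (Φ (N + j) n), hcoc (N + j) n m hNj hn hm]
    exact tendsto_nhds_unique ((t1.const_mul (Φt n m)).congr key) (t2.mul_const (Φ n m))
  have hQcomm : ∀ n m, n₀ ≤ n → n₀ ≤ m → Φt n m * Q m = Q n * Φ n m := by
    intro n m hn hm
    simp only [hQdef, Finset.mul_sum, Finset.sum_mul]
    refine Finset.sum_congr rfl fun k hk => ?_
    rw [Finset.mem_Icc] at hk
    exact hQkcomm n m hn hm k hk.1 hk.2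
  -- the tail of the perturbation tends to zero
  have hT : Tendsto T atTop (nhds 0) := by
    refine aux_tendsto_int_of_nat n₀ ?_
    have h := tendsto_sum_nat_add (f := fun i : ℕ => ‖E (n₀ + i)‖)
    refine h.congr fun j => ?_
    simp only [hTdef]
    refine tsum_congr fun i => ?_
    congr 2
    push_cast
    ring
  have hGk0 : ∀ k, 1 ≤ k → k ≤ kap → Tendsto (fun n : ℤ => Gk n k) atTop (nhds 0) := by
    intro k hk1 hk2
    have htz : Tendsto (fun n : ℤ => Kt * K * (σ k)⁻¹ * T n) atTop (nhds 0) := by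
      have h0 := hT.const_mul (Kt * K * (σ k)⁻¹)
      rw [mul_zero] at h0
      exact h0
    refine squeeze_zero_norm' ?_ htz
    filter_upwards [eventually_ge_atTop n₀] with n hn
    exact hGkbd n k hn hk1 hk2
  have hQk0 : ∀ k, 1 ≤ k → k ≤ kap →
      Tendsto (fun n : ℤ => Qk n k - P n k) atTop (nhds 0) := by
    intro k hk1 hk2
    have hX : Tendsto (fun n : ℤ => Pt n k - P n k) atTop (nhds 0) := by
      have := (htend k hk1 hk2).neg
      simpa [neg_sub] using this
    have h1 : Tendsto (fun n : ℤ => (Pt n k - P n k) * P n k) atTop (nhds 0) := by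
      have hnorm : Tendsto (fun n : ℤ => ‖Pt n k - P n k‖ * K) atTop (nhds 0) := by
        have h0 := (tendsto_zero_iff_norm_tendsto_zero.mp hX).mul_const K
        rw [zero_mul] at h0
        exact h0
      refine squeeze_zero_norm' ?_ hnorm
      filter_upwards [eventually_ge_atTop n₀] with n hn
      exact le_trans (norm_mul_le _ _)
        (mul_le_mul_of_nonneg_left (hPnorm n k hn hk1 hk2) (norm_nonneg _))
    have h3 := h1.sub (hGk0 k hk1 hk2)
    refine Tendsto.congr' ?_ (by simpa using h3)
    filter_upwards [eventually_ge_atTop n₀] with n hn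
    have hPP : P n k * P n k = P n k := by
      have h := hPorth n k k hn hk1 hk2 hk1 hk2
      rw [if_pos rfl] at h
      exact h
    simp only [hQkdef, sub_mul, hPP]
    rw [sub_right_comm]
  have hQtend1 : Tendsto (fun n : ℤ => Q n - 1) atTop (nhds 0) := by
    have h := tendsto_finset_sum (Finset.Icc 1 kap)
      (fun k hk => by
        rw [Finset.mem_Icc] at hk
        exact hQk0 k hk.1 hk.2)
    refine Tendsto.congr' ?_ (by simpa using h)
    filter_upwards [eventually_ge_atTop n₀] with n hn
    rw [Finset.sum_sub_distrib, hPsum n hn]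
    simp only [hQdef, hQkdef, Finset.sum_sub_distrib]
  have hQtend : Tendsto Q atTop (nhds 1) := by
    have h := hQtend1.add (tendsto_const_nhds (x := (1 : Op d)))
    simpa using h
  -- pick a point where Q is close to 1
  obtain ⟨N₁, hN₁⟩ := (Metric.tendsto_atTop.mp hQtend) (1 / 2) (by norm_num)
  set N : ℤ := max N₁ n₀ with hNdef
  have hNn₀ : n₀ ≤ N := le_max_right _ _
  have hsmall : ∀ n, N ≤ n → ‖Q n - 1‖ < 1 / 2 := by
    intro n hn
    have h := hN₁ n (le_trans (le_max_left _ _) hn)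
    rwa [dist_eq_norm] at h
  have hQNunit : IsUnit (Q N) := by
    have h : ‖1 - Q N‖ < 1 := by
      rw [norm_sub_rev]
      linarith [hsmall N le_rfl]
    have hu := (Units.oneSub (1 - Q N) h).isUnit
    rwa [Units.val_oneSub, sub_sub_cancel] at hu
  have hQunit : ∀ n, n₀ ≤ n → IsUnit (Q n) := by
    intro n hn
    have h1 := hQcomm n N hn hNn₀
    have hrepr : Q n = Φt n N * Q N * Φ N n := by
      calc Q n = Q n * Φ n N * Φ N n := by
            rw [mul_assoc, hcoc n N n hn hNn₀ hn, hΦ1 n hn, mul_one]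
        _ = Φt n N * Q N * Φ N n := by rw [← h1]
    rw [hrepr]
    exact ((hΦtunit n N hn hNn₀).mul hQNunit).mul (hΦunit N n hNn₀ hn)
  have hone : ‖(1 : Op d)‖ ≤ 1 := by
    rw [ContinuousLinearMap.one_def]
    exact ContinuousLinearMap.norm_id_le
  have htwo : ∀ n, n₀ ≤ n → N ≤ n → ‖Q n‖ ≤ 2 ∧ ‖Ring.inverse (Q n)‖ ≤ 2 := by
    intro n hn hNle
    have hs := hsmall n hNle
    constructor
    · calc ‖Q n‖ = ‖Q n - 1 + 1‖ := by rw [sub_add_cancel]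
        _ ≤ ‖Q n - 1‖ + ‖(1 : Op d)‖ := norm_add_le _ _
        _ ≤ 2 := by linarith
    · have hu := hQunit n hn
      have hmc : Ring.inverse (Q n) * Q n = 1 := Ring.inverse_mul_cancel _ hu
      have hid : Ring.inverse (Q n) = 1 + Ring.inverse (Q n) * (1 - Q n) := by
        rw [mul_sub, mul_one, hmc]
        abel
      have hsub : ‖1 - Q n‖ ≤ 1 / 2 := by
        rw [norm_sub_rev]; linarith
      have hb : ‖Ring.inverse (Q n)‖ ≤ 1 + ‖Ring.inverse (Q n)‖ * (1 / 2) := by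
        calc ‖Ring.inverse (Q n)‖ = ‖1 + Ring.inverse (Q n) * (1 - Q n)‖ := by rw [← hid]
          _ ≤ ‖(1 : Op d)‖ + ‖Ring.inverse (Q n) * (1 - Q n)‖ := norm_add_le _ _
          _ ≤ ‖(1 : Op d)‖ + ‖Ring.inverse (Q n)‖ * ‖1 - Q n‖ := by
              have := norm_mul_le (Ring.inverse (Q n)) (1 - Q n)
              linarith
          _ ≤ 1 + ‖Ring.inverse (Q n)‖ * (1 / 2) := by
              have h2 := mul_le_mul_of_nonneg_left hsub (norm_nonneg (Ring.inverse (Q n)))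
              linarith
      linarith [norm_nonneg (Ring.inverse (Q n))]
  have hne : (Finset.Icc n₀ N).Nonempty := ⟨N, by simp [Finset.mem_Icc, hNn₀]⟩
  refine ⟨Q, hQunit,
    ⟨max 2 ((Finset.Icc n₀ N).sup' hne (fun n => max ‖Q n‖ ‖Ring.inverse (Q n)‖)), ?_⟩,
    fun n m hn hm => hQcomm n m hn hm, hQtend⟩
  intro n hn
  rcases le_or_gt N n with h | h
  · obtain ⟨h1, h2⟩ := htwo n hn h
    exact ⟨le_trans h1 (le_max_left _ _), le_trans h2 (le_max_left _ _)⟩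
  · have hmem : n ∈ Finset.Icc n₀ N := by
      rw [Finset.mem_Icc]; exact ⟨hn, le_of_lt h⟩
    have hle := Finset.le_sup' (fun n => max ‖Q n‖ ‖Ring.inverse (Q n)‖) hmem
    constructor
    · exact le_trans (le_trans (le_max_left _ _) hle) (le_max_right _ _)
    · exact le_trans (le_trans (le_max_right _ _) hle) (le_max_right _ _)
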